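/- Let F1 and F2 be nontrivial finite graphs with disjoint vertex sets and v0 ∈ V(F1). Then VC'(F1^{v0→F2}) = max{VC'(F1), VC'(F2)}, where F1^{v0→F2} is the substitution of v0 in F1 by F2. -/

import Mathlib

def Subst {V1 V2 : Type} (G1 : SimpleGraph V1) (G2 : SimpleGraph V2) (v : V1) :
    SimpleGraph ({u : V1 // u ≠ v} ⊕ V2) where
  Adj x y :=
    match x, y with
    | Sum.inl u, Sum.inl u' => G1.Adj u.1 u'.1
    | Sum.inl u, Sum.inr _ => G1.Adj u.1 v
    | Sum.inr _, Sum.inl u => G1.Adj u.1 v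
    | Sum.inr w, Sum.inr w' => G2.Adj w w'
  symm := ⟨by
    rintro (u | w) (u' | w') h
    · exact G1.adj_symm h
    · exact h
    · exact h
    · exact G2.adj_symm h⟩
  loopless := ⟨by
    rintro (u | w) h
    · exact G1.loopless.irrefl u.1 h
    · exact G2.loopless.irrefl w h⟩

/-- The VC dimension of (neighborhoods of) a graph: the largest size of a set of
vertices shattered by vertex neighborhoods. -/
noncomputable def VCdim {V : Type} (G : SimpleGraph V) : ℕ :=
  sSup {n | ∃ U : Set V, (∀ A ⊆ U, ∃ v, G.neighborSet v ∩ U = A) ∧ U.ncard = n}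

/-- The VC' dimension of a graph: the largest size of a set of vertices almost
shattered by vertex neighborhoods. -/
noncomputable def VCdim' {V : Type} (G : SimpleGraph V) : ℕ :=
  sSup {n | ∃ U : Set V,
    (∀ A : Set V, A ⊆ U → A ≠ ∅ → A ≠ U → ∃ v, G.neighborSet v ∩ U = A \ {v}) ∧
    U.ncard = n}

/-!
Upper bound: the copy of `V2` is a module of the substitution (every outside vertex sees all of
it or none of it). An almost-shattered set that meets a module in two vertices lies inside it,
and then its witnesses may be taken inside the module too, so it is almost shattered in `F2`.
An almost-shattered set meeting the copy of `V2` in at most one vertex projects injectively to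
`V1`, collapsing the copy of `V2` to `v0`, and its image is almost shattered in `F1`.
Lower bound: `F2` and `F1` (with `v0` sent to any vertex of `V2`) embed as induced subgraphs.
-/

namespace SimpleGraph

variable {V W : Type} {G : SimpleGraph V} {H : SimpleGraph W}

def AlmostShatters (G : SimpleGraph V) (U : Set V) : Prop :=
  ∀ A : Set V, A ⊆ U → A ≠ ∅ → A ≠ U → ∃ v, G.neighborSet v ∩ U = A \ {v}

def IsModule (G : SimpleGraph V) (M : Set V) : Prop :=
  ∀ x ∉ M, ∀ a ∈ M, ∀ b ∈ M, G.Adj x a → G.Adj x b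

theorem AlmostShatters.ncard_le_VCdim' [Finite V] {U : Set V} (hU : G.AlmostShatters U) :
    U.ncard ≤ VCdim' G :=
  le_csSup ⟨Nat.card V, by rintro _ ⟨U', -, rfl⟩; exact Set.ncard_le_card U'⟩ ⟨U, hU, rfl⟩

theorem VCdim'_le {m : ℕ} (h : ∀ U, G.AlmostShatters U → U.ncard ≤ m) : VCdim' G ≤ m :=
  csSup_le' (by rintro _ ⟨U, hU, rfl⟩; exact h U hU)

theorem AlmostShatters.image {f : V → W}
    (hf : ∀ x y, f x ≠ f y → (H.Adj (f x) (f y) ↔ G.Adj x y)) {U : Set V}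
    (hU : G.AlmostShatters U) : H.AlmostShatters (f '' U) := by
  intro B hB hB0 hBU
  have hne : U ∩ f ⁻¹' B ≠ ∅ := by
    obtain ⟨_, hb⟩ := Set.nonempty_iff_ne_empty.2 hB0
    obtain ⟨y, hy, rfl⟩ := hB hb
    exact Set.nonempty_iff_ne_empty.1 ⟨y, hy, hb⟩
  have hproper : U ∩ f ⁻¹' B ≠ U := fun hUB =>
    hBU (hB.antisymm (Set.image_subset_iff.2 (hUB ▸ Set.inter_subset_right)))
  obtain ⟨x, hx⟩ := hU (U ∩ f ⁻¹' B) Set.inter_subset_left hne hproper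
  refine ⟨f x, Set.ext fun z => ⟨?_, ?_⟩⟩
  · rintro ⟨hxz, y, hy, rfl⟩
    have hne : f x ≠ f y := H.ne_of_adj hxz
    have hy' : y ∈ (U ∩ f ⁻¹' B) \ {x} := hx ▸ ⟨(hf x y hne).1 hxz, hy⟩
    exact ⟨hy'.1.2, hne.symm⟩
  · rintro ⟨hzB, hzx⟩
    obtain ⟨y, hy, rfl⟩ := hB hzB
    have hy' : y ∈ G.neighborSet x ∩ U := hx ▸ ⟨⟨hy, hzB⟩, fun h => hzx (congrArg f h)⟩
    exact ⟨(hf x y (Ne.symm hzx)).2 hy'.1, y, hy, rfl⟩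

theorem VCdim'_le_of_embedding [Finite W] (f : G ↪g H) : VCdim' G ≤ VCdim' H :=
  VCdim'_le fun U hU => by
    rw [← Set.ncard_image_of_injective U f.injective]
    exact (hU.image fun _ _ _ => f.map_adj_iff).ncard_le_VCdim'

theorem AlmostShatters.subset_of_isModule {U M : Set V} (hU : G.AlmostShatters U)
    (hM : G.IsModule M) {a b : V} (ha : a ∈ U ∩ M) (hb : b ∈ U ∩ M) (hab : a ≠ b) :
    U ⊆ M := by
  have witness_mem : ∀ A ⊆ U, a ∈ A → b ∉ A → ∃ x ∈ M, G.neighborSet x ∩ U = A \ {x} := by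
    intro A hAU haA hbA
    obtain ⟨x, hx⟩ := hU A hAU (Set.nonempty_iff_ne_empty.1 ⟨a, haA⟩) (fun h => hbA (h ▸ hb.1))
    refine ⟨x, by_contra fun hxM => hbA ?_, hx⟩
    have hxa : G.Adj x a := (hx ▸ ⟨haA, fun h => hxM (h ▸ ha.2)⟩ : a ∈ G.neighborSet x ∩ U).1
    have hbx : b ∈ A \ {x} := hx ▸ ⟨hM x hxM a ha.2 b hb.2 hxa, hb.1⟩
    exact hbx.1
  intro c hcU
  by_contra hcM
  obtain ⟨x, hxM, hx⟩ := witness_mem {a} (Set.singleton_subset_iff.2 ha.1) rfl hab.symm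
  obtain ⟨y, hyM, hy⟩ :=
    witness_mem {a, c} (Set.insert_subset ha.1 (Set.singleton_subset_iff.2 hcU))
    (Set.mem_insert a _) (by rintro (h | h); exacts [hab h.symm, hcM (h ▸ hb.2)])
  have hcy : G.Adj c y :=
    G.adj_symm (hy ▸ ⟨Or.inr rfl, fun h => hcM (h ▸ hyM)⟩ : c ∈ G.neighborSet y ∩ U).1
  have hcx : c ∈ G.neighborSet x ∩ U := ⟨G.adj_symm (hM c hcM y hyM x hxM hcy), hcU⟩
  rw [hx] at hcx
  exact hcM (hcx.1 ▸ ha.2)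

theorem AlmostShatters.exists_mem_of_isModule {U M : Set V} (hU : G.AlmostShatters U)
    (hM : G.IsModule M) (hUM : U ⊆ M) {A : Set V} (hAU : A ⊆ U) (hA0 : A ≠ ∅) (hA : A ≠ U) :
    ∃ x ∈ M, G.neighborSet x ∩ U = A \ {x} := by
  obtain ⟨x, hx⟩ := hU A hAU hA0 hA
  refine ⟨x, by_contra fun hxM => hA (hAU.antisymm fun u hu => ?_), hx⟩
  obtain ⟨a, haA⟩ := Set.nonempty_iff_ne_empty.2 hA0
  have hxa : G.Adj x a :=
    (hx ▸ ⟨haA, fun h => hxM (h ▸ hUM (hAU haA))⟩ : a ∈ G.neighborSet x ∩ U).1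
  have hu' : u ∈ A \ {x} := hx ▸ ⟨hM x hxM a (hUM (hAU haA)) u (hUM hu) hxa, hu⟩
  exact hu'.1

theorem AlmostShatters.of_image (f : G ↪g H) (hM : H.IsModule (Set.range f)) {U : Set V}
    (hU : H.AlmostShatters (f '' U)) : G.AlmostShatters U := by
  intro B hBU hB0 hB
  obtain ⟨_, ⟨x, rfl⟩, hx⟩ := hU.exists_mem_of_isModule hM (Set.image_subset_range f U)
    (Set.image_mono hBU) (by simpa using hB0) (f.injective.image_injective.ne hB)
  refine ⟨x, ?_⟩
  simpa [Set.preimage_sdiff, ← Set.image_singleton, Set.preimage_image_eq _ f.injective]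
    using congrArg (f ⁻¹' ·) hx

end SimpleGraph

namespace Subst

variable {V1 V2 : Type} (F1 : SimpleGraph V1) (F2 : SimpleGraph V2) (v0 : V1)

def inrEmbedding : F2 ↪g Subst F1 F2 v0 := ⟨⟨Sum.inr, Sum.inr_injective⟩, Iff.rfl⟩

open Classical in
noncomputable def embedding (w : V2) : F1 ↪g Subst F1 F2 v0 where
  toFun u := if h : u = v0 then Sum.inr w else Sum.inl ⟨u, h⟩
  inj' a b := by
    by_cases ha : a = v0 <;> by_cases hb : b = v0 <;> simp [ha, hb]
  map_rel_iff' {a b} := by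
    by_cases ha : a = v0 <;> by_cases hb : b = v0 <;> simp [ha, hb, Subst, F1.adj_comm _ v0]

def proj : {u : V1 // u ≠ v0} ⊕ V2 → V1 :=
  Sum.elim Subtype.val fun _ => v0

theorem adj_proj_iff (x y : {u : V1 // u ≠ v0} ⊕ V2) (h : proj v0 x ≠ proj v0 y) :
    F1.Adj (proj v0 x) (proj v0 y) ↔ (Subst F1 F2 v0).Adj x y := by
  rcases x with u | w <;> rcases y with u' | w'
  · exact Iff.rfl
  · exact Iff.rfl
  · exact F1.adj_comm _ _
  · exact absurd rfl h

theorem injOn_proj {U : Set ({u : V1 // u ≠ v0} ⊕ V2)}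
    (hU : (U ∩ Set.range (inrEmbedding F1 F2 v0)).Subsingleton) : Set.InjOn (proj v0) U := by
  rintro (u | w) hx (u' | w') hy h
  · exact congrArg Sum.inl (Subtype.ext h)
  · exact absurd h u.2
  · exact absurd h.symm u'.2
  · exact hU ⟨hx, w, rfl⟩ ⟨hy, w', rfl⟩

theorem isModule_range_inrEmbedding :
    (Subst F1 F2 v0).IsModule (Set.range (inrEmbedding F1 F2 v0)) := by
  rintro (u | w) hx _ ⟨a, rfl⟩ _ ⟨b, rfl⟩ hxa
  · exact hxa
  · exact absurd ⟨w, rfl⟩ hx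

end Subst

theorem stmt14_general {V1 V2 : Type} [Fintype V1] [Fintype V2] [Nonempty V2]
    (F1 : SimpleGraph V1) (F2 : SimpleGraph V2) (v0 : V1) :
    VCdim' (Subst F1 F2 v0) = max (VCdim' F1) (VCdim' F2) := by
  obtain ⟨w⟩ := ‹Nonempty V2›
  set ι := Subst.inrEmbedding F1 F2 v0
  refine le_antisymm (SimpleGraph.VCdim'_le fun U hU => ?_) (max_le
    (SimpleGraph.VCdim'_le_of_embedding (Subst.embedding F1 F2 v0 w))
    (SimpleGraph.VCdim'_le_of_embedding ι))
  by_cases hU2 : (U ∩ Set.range ι).Subsingleton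
  · rw [← (Subst.injOn_proj F1 F2 v0 hU2).ncard_image]
    exact le_max_of_le_left (hU.image (Subst.adj_proj_iff F1 F2 v0)).ncard_le_VCdim'
  · obtain ⟨a, ha, b, hb, hab⟩ := Set.not_subsingleton_iff.1 hU2
    have hM := Subst.isModule_range_inrEmbedding F1 F2 v0
    obtain ⟨U', rfl⟩ :=
      Set.subset_range_iff_exists_image_eq.1 (hU.subset_of_isModule hM ha hb hab)
    rw [Set.ncard_image_of_injective _ ι.injective]
    exact le_max_of_le_right (hU.of_image ι hM).ncard_le_VCdim'

/-- VC' dimension of a substitution is the max of the VC' dimensions. -/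
theorem stmt14 {V1 V2 : Type} [Fintype V1] [Fintype V2] [Nonempty V1] [Nonempty V2]
    (F1 : SimpleGraph V1) (F2 : SimpleGraph V2) (v0 : V1) :
    VCdim' (Subst F1 F2 v0) = max (VCdim' F1) (VCdim' F2) :=
  stmt14_general F1 F2 v0
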